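/- Let Ψ : ℝ^{m×n} → [0,∞) be continuous with max(|ξ|²/c − c, 0) ≤ Ψ(ξ) ≤ c(|ξ|² + 1), let ℓ > 0, and define h(ξ) := min(Ψ(ξ), ℓ·Ψ(ξ)^{1/2}). Then for all ξ: max(|ξ|/c' − c', 0) ≤ h^qc(ξ) ≤ h(ξ) ≤ c'(|ξ| + 1) for some constant c' > 0 depending only on c and ℓ, where h^qc is the quasiconvex envelope of h. -/

import Mathlib

open MeasureTheory Filter Set

noncomputable section

/-- Frobenius norm of a real matrix. -/
def frob {m n : ℕ} (ξ : Matrix (Fin m) (Fin n) ℝ) : ℝ :=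
  Real.sqrt (∑ i, ∑ j, (ξ i j) ^ 2)

/-- Convex envelope on a set `s`: the pointwise supremum of all functions convex on `s`
and bounded above by `f` on `s`. -/
def convEnvOn {E : Type*} [AddCommGroup E] [Module ℝ E] (s : Set E) (f : E → ℝ) : E → ℝ :=
  fun x => sSup {y | ∃ g : E → ℝ, ConvexOn ℝ s g ∧ (∀ z ∈ s, g z ≤ f z) ∧ y = g x}

/-- The open unit cube `(0,1)^n`. -/
def unitCube (n : ℕ) : Set (Fin n → ℝ) := Set.univ.pi fun _ => Set.Ioo (0 : ℝ) 1

/-- The gradient of `φ : ℝ^n → ℝ^m` as an `m × n` matrix. -/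
def gradMatrix {m n : ℕ} (φ : (Fin n → ℝ) → (Fin m → ℝ)) (x : Fin n → ℝ) :
    Matrix (Fin m) (Fin n) ℝ := fun i j => fderiv ℝ φ x (Pi.single j 1) i

/-- Smooth test functions compactly supported in the open unit cube. -/
def testFuns (m n : ℕ) : Set ((Fin n → ℝ) → (Fin m → ℝ)) :=
  {φ | ContDiff ℝ (⊤ : ℕ∞) φ ∧ HasCompactSupport φ ∧ tsupport φ ⊆ unitCube n}

/-- The quasiconvex envelope of `h`. -/
def qcEnv {m n : ℕ} (h : Matrix (Fin m) (Fin n) ℝ → ℝ)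
    (ξ : Matrix (Fin m) (Fin n) ℝ) : ℝ :=
  sInf {y | ∃ φ ∈ testFuns m n, y = ∫ x in unitCube n, h (ξ + gradMatrix φ x)}

/-- The recession function `F^∞(ξ) = limsup_{t→∞} F(tξ)/t`. -/
def recession {m n : ℕ} (F : Matrix (Fin m) (Fin n) ℝ → ℝ)
    (ξ : Matrix (Fin m) (Fin n) ℝ) : ℝ :=
  Filter.limsup (fun t : ℝ => F (t • ξ) / t) Filter.atTop

/-! ### Auxiliary material -/

/-- The matrix viewed as a point of Euclidean space, so that `frob` is its norm. -/
def eucOf {m n : ℕ} (ξ : Matrix (Fin m) (Fin n) ℝ) : EuclideanSpace ℝ (Fin m × Fin n) :=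
  (WithLp.equiv 2 _).symm fun p => ξ p.1 p.2

lemma frob_eq {m n : ℕ} (ξ : Matrix (Fin m) (Fin n) ℝ) : frob ξ = ‖eucOf ξ‖ := by
  rw [EuclideanSpace.norm_eq, frob]
  congr 1
  rw [Fintype.sum_prod_type]
  simp [eucOf, Real.norm_eq_abs, sq_abs]

lemma eucOf_add {m n : ℕ} (ξ η : Matrix (Fin m) (Fin n) ℝ) :
    eucOf (ξ + η) = eucOf ξ + eucOf η := rfl

lemma frob_nonneg {m n : ℕ} (ξ : Matrix (Fin m) (Fin n) ℝ) : 0 ≤ frob ξ := Real.sqrt_nonneg _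

lemma volume_unitCube (n : ℕ) : volume (unitCube n) = 1 := by
  rw [unitCube, volume_pi_pi]
  simp [Real.volume_Ioo]

lemma measurableSet_unitCube (n : ℕ) : MeasurableSet (unitCube n) :=
  MeasurableSet.univ_pi fun _ => measurableSet_Ioo

lemma unitCube_subset_Icc (n : ℕ) :
    unitCube n ⊆ Set.univ.pi fun _ : Fin n => Set.Icc (0 : ℝ) 1 :=
  Set.pi_mono fun _ _ => Set.Ioo_subset_Icc_self

lemma isCompact_Icc_pi (n : ℕ) :
    IsCompact (Set.univ.pi fun _ : Fin n => Set.Icc (0 : ℝ) 1) :=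
  isCompact_univ_pi fun _ => isCompact_Icc

variable {m n : ℕ} {φ : (Fin n → ℝ) → (Fin m → ℝ)}

lemma fderiv_apply_cont (hφ : ContDiff ℝ (⊤ : ℕ∞) φ) (v : Fin n → ℝ) (i : Fin m) :
    Continuous fun x => fderiv ℝ φ x v i := by
  have h1 : Continuous (fderiv ℝ φ) := hφ.continuous_fderiv (by simp)
  exact (continuous_apply i).comp ((ContinuousLinearMap.apply ℝ (Fin m → ℝ) v).continuous.comp h1)

lemma fderiv_apply_cs (hcs : HasCompactSupport φ) (v : Fin n → ℝ) (i : Fin m) :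
    HasCompactSupport fun x => fderiv ℝ φ x v i := by
  have h1 : HasCompactSupport (fderiv ℝ φ) := hcs.fderiv (𝕜 := ℝ)
  have h2 : HasCompactSupport fun x => fderiv ℝ φ x v :=
    h1.comp_left (g := fun A : (Fin n → ℝ) →L[ℝ] (Fin m → ℝ) => A v) rfl
  exact h2.comp_left (g := fun w : Fin m → ℝ => w i) rfl

lemma integral_fderiv_component (hφ : ContDiff ℝ (⊤ : ℕ∞) φ) (hcs : HasCompactSupport φ)
    (v : Fin n → ℝ) (i : Fin m) :
    ∫ x, fderiv ℝ φ x v i = 0 := by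
  set P : (Fin m → ℝ) →L[ℝ] ℝ := ContinuousLinearMap.proj (R := ℝ) (φ := fun _ : Fin m => ℝ) i
    with hP
  set g : (Fin n → ℝ) → ℝ := fun x => φ x i with hg
  have hgc : ContDiff ℝ (⊤ : ℕ∞) g := P.contDiff.comp hφ
  have hgcs : HasCompactSupport g := hcs.comp_left (g := fun w : Fin m → ℝ => w i) rfl
  have hfd : ∀ x, fderiv ℝ g x v = fderiv ℝ φ x v i := by
    intro x
    have h1 : fderiv ℝ (⇑P ∘ φ) x = P.comp (fderiv ℝ φ x) := by
      rw [fderiv_comp x P.differentiableAt (hφ.differentiable (by simp) x), P.fderiv]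
    have : fderiv ℝ g x = P.comp (fderiv ℝ φ x) := h1
    rw [this]; rfl
  have hcont : Continuous fun x => fderiv ℝ g x v := by
    have := fderiv_apply_cont hφ v i
    simpa only [← hfd] using this
  have hcs2 : HasCompactSupport fun x => fderiv ℝ g x v := by
    have := fderiv_apply_cs hcs v i
    rw [HasCompactSupport] at this ⊢
    convert this using 2
    exact funext fun x => hfd x
  have key : ∫ x, (fun _ : Fin n → ℝ => (1:ℝ)) x * fderiv ℝ g x v
      = - ∫ x, fderiv ℝ (fun _ : Fin n → ℝ => (1:ℝ)) x v * g x := by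
    apply integral_mul_fderiv_eq_neg_fderiv_mul_of_integrable
    · simp [fderiv_fun_const]
    · simp only [one_mul]
      exact hcont.integrable_of_hasCompactSupport hcs2
    · simp only [one_mul]
      exact hgc.continuous.integrable_of_hasCompactSupport hgcs
    · exact fun x _ => contDiff_const.differentiable (n := 1) one_ne_zero x
    · exact fun x _ => hgc.differentiable (by simp) x
  simp only [one_mul, fderiv_fun_const, Pi.zero_apply, ContinuousLinearMap.zero_apply, zero_mul,
    integral_zero, neg_zero, hfd] at key
  exact key

lemma eucGrad_cont (hφ : ContDiff ℝ (⊤ : ℕ∞) φ) : Continuous fun x => eucOf (gradMatrix φ x) := by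
  apply (PiLp.continuous_toLp (p := 2) (β := fun _ : Fin m × Fin n => ℝ)).comp
  apply continuous_pi
  intro p
  exact fderiv_apply_cont hφ (Pi.single p.2 1) p.1

lemma eucGrad_cs (hcs : HasCompactSupport φ) :
    HasCompactSupport fun x => eucOf (gradMatrix φ x) := by
  apply (hcs.fderiv (𝕜 := ℝ)).mono'
  intro x hx
  apply subset_tsupport _
  intro h0
  apply hx
  show eucOf (gradMatrix φ x) = 0
  ext p
  simp [eucOf, gradMatrix, h0]

lemma integral_eucGrad (hφ : ContDiff ℝ (⊤ : ℕ∞) φ) (hcs : HasCompactSupport φ)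
    (hsupp : tsupport φ ⊆ unitCube n) :
    ∫ x in unitCube n, eucOf (gradMatrix φ x) = 0 := by
  have hzero : ∀ x ∉ unitCube n, eucOf (gradMatrix φ x) = 0 := by
    intro x hx
    have hx' : x ∉ tsupport φ := fun h => hx (hsupp h)
    have h0 : fderiv ℝ φ x = 0 := by
      by_contra h
      exact hx' (tsupport_fderiv_subset ℝ (subset_tsupport _ (by simpa using h)))
    ext p
    simp [eucOf, gradMatrix, h0]
  rw [setIntegral_eq_integral_of_forall_compl_eq_zero hzero]
  have hint : Integrable fun x => eucOf (gradMatrix φ x) :=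
    (eucGrad_cont hφ).integrable_of_hasCompactSupport (eucGrad_cs hcs)
  ext p
  have h1 := (EuclideanSpace.proj (𝕜 := ℝ) p).integral_comp_comm hint
  have h2 : ∫ x, (EuclideanSpace.proj (𝕜 := ℝ) p) (eucOf (gradMatrix φ x))
      = ∫ x, fderiv ℝ φ x (Pi.single p.2 1) p.1 := rfl
  have h3 := integral_fderiv_component hφ hcs (Pi.single p.2 1) p.1
  have : (EuclideanSpace.proj (𝕜 := ℝ) p) (∫ x, eucOf (gradMatrix φ x)) = 0 := by
    rw [← h1, h2, h3]
  exact this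

lemma integral_eucF (ξ : Matrix (Fin m) (Fin n) ℝ) (hφ : ContDiff ℝ (⊤ : ℕ∞) φ)
    (hcs : HasCompactSupport φ) (hsupp : tsupport φ ⊆ unitCube n) :
    ∫ x in unitCube n, eucOf (ξ + gradMatrix φ x) = eucOf ξ := by
  have hvol : volume (unitCube n) = 1 := volume_unitCube n
  have hint : IntegrableOn (fun x => eucOf (gradMatrix φ x)) (unitCube n) :=
    ((eucGrad_cont hφ).integrable_of_hasCompactSupport (eucGrad_cs hcs)).integrableOn
  have hconst : IntegrableOn (fun _ : Fin n → ℝ => eucOf ξ) (unitCube n) := by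
    exact integrableOn_const (by rw [hvol]; exact ENNReal.one_ne_top)
  calc ∫ x in unitCube n, eucOf (ξ + gradMatrix φ x)
      = ∫ x in unitCube n, (eucOf ξ + eucOf (gradMatrix φ x)) := by
        simp only [eucOf_add]
    _ = (∫ _ in unitCube n, eucOf ξ) + ∫ x in unitCube n, eucOf (gradMatrix φ x) :=
        integral_add hconst hint
    _ = eucOf ξ := by
        rw [integral_eucGrad hφ hcs hsupp, setIntegral_const, measureReal_def, hvol]
        simp

theorem stmt9 (m n : ℕ) (c ℓ : ℝ) (hc : 1 ≤ c) (hℓ : 0 < ℓ)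
    (Ψ : Matrix (Fin m) (Fin n) ℝ → ℝ) (hΨc : Continuous Ψ) (hΨ0 : ∀ ξ, 0 ≤ Ψ ξ)
    (hlb : ∀ ξ, max ((frob ξ) ^ 2 / c - c) 0 ≤ Ψ ξ)
    (hub : ∀ ξ, Ψ ξ ≤ c * ((frob ξ) ^ 2 + 1)) :
    ∃ c' > (0 : ℝ), ∀ ξ,
      max (frob ξ / c' - c') 0 ≤ qcEnv (fun η => min (Ψ η) (ℓ * Real.sqrt (Ψ η))) ξ ∧
      qcEnv (fun η => min (Ψ η) (ℓ * Real.sqrt (Ψ η))) ξ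
        ≤ min (Ψ ξ) (ℓ * Real.sqrt (Ψ ξ)) ∧
      min (Ψ ξ) (ℓ * Real.sqrt (Ψ ξ)) ≤ c' * (frob ξ + 1) := by
  classical
  set h : Matrix (Fin m) (Fin n) ℝ → ℝ := fun η => min (Ψ η) (ℓ * Real.sqrt (Ψ η)) with hh
  have hc0 : (0:ℝ) < c := lt_of_lt_of_le one_pos hc
  set sc : ℝ := Real.sqrt c with hsc
  have hsc0 : 0 < sc := Real.sqrt_pos.2 hc0
  set a : ℝ := ℓ / sc with ha
  have ha0 : 0 < a := div_pos hℓ hsc0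
  set b : ℝ := ℓ * sc + ℓ * Real.sqrt (ℓ ^ 2 + c) with hb
  have hb0 : 0 < b := by positivity
  set c' : ℝ := max (max (1 / a) b) (ℓ * sc) with hc'
  have hc'0 : 0 < c' := lt_of_lt_of_le (by positivity) (le_max_right _ _)
  -- pointwise nonnegativity of h
  have hnn : ∀ η, 0 ≤ h η := fun η =>
    le_min (hΨ0 η) (mul_nonneg hℓ.le (Real.sqrt_nonneg _))
  -- pointwise lower bound
  have hlow : ∀ η, a * frob η - b ≤ h η := by
    intro η
    have hΨη := hΨ0 η
    have hfr := frob_nonneg η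
    have h1 : (frob η) ^ 2 / c - c ≤ Ψ η := le_trans (le_max_left _ _) (hlb η)
    have h2 : (frob η) ^ 2 ≤ c * (Ψ η + c) := by
      have := (div_le_iff₀ hc0).1 (by linarith : (frob η) ^ 2 / c ≤ Ψ η + c)
      linarith [this]
    by_cases hcase : Ψ η ≤ ℓ ^ 2
    · -- small region: a * frob η ≤ b
      have h3 : (frob η) ^ 2 ≤ c * (ℓ ^ 2 + c) := by nlinarith
      have h4 : frob η ≤ sc * Real.sqrt (ℓ ^ 2 + c) := by
        have := Real.sqrt_le_sqrt h3
        rwa [Real.sqrt_mul hc0.le, Real.sqrt_sq hfr] at this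
      have h5 : a * frob η ≤ ℓ * Real.sqrt (ℓ ^ 2 + c) := by
        calc a * frob η ≤ a * (sc * Real.sqrt (ℓ ^ 2 + c)) := by
              exact mul_le_mul_of_nonneg_left h4 ha0.le
          _ = ℓ * Real.sqrt (ℓ ^ 2 + c) := by
              rw [ha]; field_simp
      have : a * frob η - b ≤ 0 := by
        have : ℓ * Real.sqrt (ℓ ^ 2 + c) ≤ b := by
          rw [hb]; nlinarith [mul_pos hℓ hsc0]
        linarith
      linarith [hnn η]
    · -- large region
      push_neg at hcase
      have hsq : ℓ ≤ Real.sqrt (Ψ η) := by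
        have : Real.sqrt (ℓ ^ 2) ≤ Real.sqrt (Ψ η) := Real.sqrt_le_sqrt hcase.le
        rwa [Real.sqrt_sq hℓ.le] at this
      have h4 : frob η ≤ sc * Real.sqrt (Ψ η + c) := by
        have := Real.sqrt_le_sqrt h2
        rwa [Real.sqrt_mul hc0.le, Real.sqrt_sq hfr] at this
      have h5 : Real.sqrt (Ψ η + c) ≤ Real.sqrt (Ψ η) + sc := by
        have hsum : Ψ η + c ≤ (Real.sqrt (Ψ η) + sc) ^ 2 := by
          have e1 : Real.sqrt (Ψ η) ^ 2 = Ψ η := Real.sq_sqrt hΨη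
          have e2 : sc ^ 2 = c := Real.sq_sqrt hc0.le
          nlinarith [Real.sqrt_nonneg (Ψ η), hsc0.le]
        have := Real.sqrt_le_sqrt hsum
        rwa [Real.sqrt_sq (by positivity)] at this
      have h6 : a * frob η ≤ ℓ * (Real.sqrt (Ψ η) + sc) := by
        calc a * frob η ≤ a * (sc * Real.sqrt (Ψ η + c)) := mul_le_mul_of_nonneg_left h4 ha0.le
          _ = ℓ * Real.sqrt (Ψ η + c) := by rw [ha]; field_simp
          _ ≤ ℓ * (Real.sqrt (Ψ η) + sc) := mul_le_mul_of_nonneg_left h5 hℓ.le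
      have h7 : a * frob η - b ≤ ℓ * Real.sqrt (Ψ η) := by
        rw [hb]
        have : 0 ≤ ℓ * Real.sqrt (ℓ ^ 2 + c) := by positivity
        nlinarith
      have h8 : ℓ * Real.sqrt (Ψ η) ≤ Ψ η := by
        have := mul_le_mul_of_nonneg_right hsq (Real.sqrt_nonneg (Ψ η))
        nlinarith [Real.sq_sqrt hΨη]
      rw [hh]
      exact le_min (le_trans h7 h8) h7
  -- continuity of h
  have hhc : Continuous h := hΨc.min (continuous_const.mul (hΨc.sqrt))
  refine ⟨c', hc'0, fun ξ => ?_⟩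
  set S := {y | ∃ φ ∈ testFuns m n, y = ∫ x in unitCube n, h (ξ + gradMatrix φ x)} with hS
  -- the zero test function and the corresponding element of S
  have hzero_mem : (0 : (Fin n → ℝ) → (Fin m → ℝ)) ∈ testFuns m n := by
    refine ⟨?_, ?_, ?_⟩
    · exact contDiff_const
    · rw [HasCompactSupport]
      have : tsupport (0 : (Fin n → ℝ) → (Fin m → ℝ)) = ∅ := by
        simp [tsupport, Function.support]
      rw [this]; exact isCompact_empty
    · have : tsupport (0 : (Fin n → ℝ) → (Fin m → ℝ)) = ∅ := by
        simp [tsupport, Function.support]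
      rw [this]; exact empty_subset _
  have hgrad0 : ∀ x : Fin n → ℝ, gradMatrix (0 : (Fin n → ℝ) → (Fin m → ℝ)) x = 0 := by
    intro x
    funext i j
    have : fderiv ℝ (fun _ : Fin n → ℝ => (0 : Fin m → ℝ)) x = 0 := fderiv_const_apply _
    simp only [gradMatrix]
    rw [show (0 : (Fin n → ℝ) → (Fin m → ℝ)) = fun _ => (0 : Fin m → ℝ) from rfl, this]
    rfl
  have hval0 : (∫ x in unitCube n, h (ξ + gradMatrix (0 : (Fin n → ℝ) → (Fin m → ℝ)) x)) = h ξ := by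
    have : ∀ x : Fin n → ℝ, h (ξ + gradMatrix (0 : (Fin n → ℝ) → (Fin m → ℝ)) x) = h ξ := by
      intro x; rw [hgrad0 x, add_zero]
    simp only [this]
    rw [setIntegral_const, measureReal_def, volume_unitCube]
    simp
  have hmem0 : h ξ ∈ S := ⟨0, hzero_mem, hval0.symm⟩
  have hSne : S.Nonempty := ⟨h ξ, hmem0⟩
  -- every element of S is bounded below
  have hlbS : ∀ y ∈ S, max (frob ξ / c' - c') 0 ≤ y := by
    rintro y ⟨φ, ⟨hφ1, hφ2, hφ3⟩, rfl⟩
    have hFc : Continuous fun x => h (ξ + gradMatrix φ x) := by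
      apply hhc.comp
      apply continuous_const.add
      have : Continuous fun x => gradMatrix φ x := by
        apply continuous_pi; intro i
        apply continuous_pi; intro j
        exact fderiv_apply_cont hφ1 (Pi.single j 1) i
      exact this
    have hGc : Continuous fun x => eucOf (ξ + gradMatrix φ x) := by
      apply (PiLp.continuous_toLp (p := 2) (β := fun _ : Fin m × Fin n => ℝ)).comp
      apply continuous_pi
      intro p
      exact (continuous_const.add (fderiv_apply_cont hφ1 (Pi.single p.2 1) p.1))
    have hFi : IntegrableOn (fun x => h (ξ + gradMatrix φ x)) (unitCube n) :=
      (hFc.continuousOn.integrableOn_compact (isCompact_Icc_pi n)).mono_set (unitCube_subset_Icc n)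
    have hGi : IntegrableOn (fun x => eucOf (ξ + gradMatrix φ x)) (unitCube n) :=
      (hGc.continuousOn.integrableOn_compact (isCompact_Icc_pi n)).mono_set (unitCube_subset_Icc n)
    have hnorm : ∀ x, frob (ξ + gradMatrix φ x) = ‖eucOf (ξ + gradMatrix φ x)‖ :=
      fun x => frob_eq _
    -- nonnegativity part
    have hge0 : 0 ≤ ∫ x in unitCube n, h (ξ + gradMatrix φ x) :=
      setIntegral_nonneg (measurableSet_unitCube n) fun x _ => hnn _
    -- lower bound part
    have hψi : IntegrableOn (fun x => a * ‖eucOf (ξ + gradMatrix φ x)‖ - b) (unitCube n) :=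
      ((hGi.norm.const_mul a).sub (integrableOn_const (by
        rw [volume_unitCube]; exact ENNReal.one_ne_top)))
    have hmono : (∫ x in unitCube n, (a * ‖eucOf (ξ + gradMatrix φ x)‖ - b))
        ≤ ∫ x in unitCube n, h (ξ + gradMatrix φ x) := by
      apply setIntegral_mono_on hψi hFi (measurableSet_unitCube n)
      intro x _
      have := hlow (ξ + gradMatrix φ x)
      rwa [hnorm x] at this
    have hcompute : (∫ x in unitCube n, (a * ‖eucOf (ξ + gradMatrix φ x)‖ - b))
        = a * (∫ x in unitCube n, ‖eucOf (ξ + gradMatrix φ x)‖) - b := by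
      rw [integral_sub (hGi.norm.const_mul a) (integrableOn_const (by
        rw [volume_unitCube]; exact ENNReal.one_ne_top))]
      rw [integral_const_mul, setIntegral_const, measureReal_def, volume_unitCube]
      simp
    have hjensen : frob ξ ≤ ∫ x in unitCube n, ‖eucOf (ξ + gradMatrix φ x)‖ := by
      rw [frob_eq, ← integral_eucF ξ hφ1 hφ2 hφ3]
      exact norm_integral_le_integral_norm _
    have hfinal : a * frob ξ - b ≤ ∫ x in unitCube n, h (ξ + gradMatrix φ x) := by
      have : a * frob ξ - b ≤ a * (∫ x in unitCube n, ‖eucOf (ξ + gradMatrix φ x)‖) - b := by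
        have := mul_le_mul_of_nonneg_left hjensen ha0.le
        linarith
      linarith [hcompute ▸ hmono]
    apply max_le _ hge0
    have h1c' : 1 / c' ≤ a := by
      rw [div_le_iff₀ hc'0]
      have : 1 / a ≤ c' := le_trans (le_max_left _ _) (le_max_left _ _)
      calc (1:ℝ) = a * (1 / a) := by field_simp
        _ ≤ a * c' := mul_le_mul_of_nonneg_left this ha0.le
    have hbc' : b ≤ c' := le_trans (le_max_right _ _) (le_max_left _ _)
    have : frob ξ / c' - c' ≤ a * frob ξ - b := by
      have hfr := frob_nonneg ξ
      have : frob ξ / c' ≤ a * frob ξ := by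
        rw [div_eq_mul_one_div]
        calc frob ξ * (1 / c') ≤ frob ξ * a := mul_le_mul_of_nonneg_left h1c' hfr
          _ = a * frob ξ := mul_comm _ _
      linarith
    linarith
  refine ⟨le_csInf hSne hlbS, ?_, ?_⟩
  · -- qcEnv ≤ h ξ
    have hbdd : BddBelow S := ⟨0, fun y hy => le_trans (le_max_right _ _) (hlbS y hy)⟩
    exact csInf_le hbdd hmem0
  · -- h ξ ≤ c' (frob ξ + 1)
    have h1 : h ξ ≤ ℓ * Real.sqrt (Ψ ξ) := min_le_right _ _
    have h2 : Real.sqrt (Ψ ξ) ≤ sc * (frob ξ + 1) := by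
      have hfr := frob_nonneg ξ
      have : Ψ ξ ≤ (sc * (frob ξ + 1)) ^ 2 := by
        have e2 : sc ^ 2 = c := Real.sq_sqrt hc0.le
        have := hub ξ
        nlinarith
      have := Real.sqrt_le_sqrt this
      rwa [Real.sqrt_sq (by positivity)] at this
    have h3 : ℓ * Real.sqrt (Ψ ξ) ≤ (ℓ * sc) * (frob ξ + 1) := by
      calc ℓ * Real.sqrt (Ψ ξ) ≤ ℓ * (sc * (frob ξ + 1)) := mul_le_mul_of_nonneg_left h2 hℓ.le
        _ = (ℓ * sc) * (frob ξ + 1) := by ring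
    have h4 : (ℓ * sc) * (frob ξ + 1) ≤ c' * (frob ξ + 1) := by
      apply mul_le_mul_of_nonneg_right (le_max_right _ _)
      have := frob_nonneg ξ; linarith
    calc h ξ ≤ ℓ * Real.sqrt (Ψ ξ) := h1
      _ ≤ (ℓ * sc) * (frob ξ + 1) := h3
      _ ≤ c' * (frob ξ + 1) := h4
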